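/- arXiv:2308.02148 — 8 statements merged into one kernel-verified Lean document; each statement's English description precedes it below -/
import Mathlib

section
/- Let V be a chain complete partially ordered set and let S be an order preserving self-map of V with at most one fixed point in V. Then S is order stable on V: S has a unique fixed point v̄ in V, v ≤ Sv implies v ≤ v̄, and Sv ≤ v implies v̄ ≤ v. -/
/-!
By Zorn's lemma, a maximal element `m` of `{u | u ≤ S u ∧ u ≤ b}` is a fixed point: chain suprema
stay in this set because `S` is monotone, and `S m` lies in it as well, so `S m ≤ m` by maximality.
Applied between `bot` and `top`, below `top`, and above `bot`, this gives a fixed point, a fixed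
point above each post-fixed point and one below each pre-fixed point; uniqueness identifies them.
-/

theorem exists_fixedPoint_between_of_le_map_of_map_le {V : Type*} [PartialOrder V]
    (hcc : ∀ C : Set V, IsChain (· ≤ ·) C → C.Nonempty → ∃ w : V, IsLUB C w)
    {S : V → V} (hS : Monotone S) {v b : V} (hv : v ≤ S v) (hb : S b ≤ b) (hvb : v ≤ b) :
    ∃ w : V, S w = w ∧ v ≤ w ∧ w ≤ b := by
  set P : Set V := {u | u ≤ S u ∧ u ≤ b}
  have chain_bdd : ∀ C ⊆ P, IsChain (· ≤ ·) C → ∀ y ∈ C, ∃ ub ∈ P, ∀ z ∈ C, z ≤ ub := by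
    intro C hCP hC y hy
    obtain ⟨w, hw_ub, hw_least⟩ := hcc C hC ⟨y, hy⟩
    exact ⟨w, ⟨hw_least fun z hz => (hCP hz).1.trans (hS (hw_ub hz)),
      hw_least fun z hz => (hCP hz).2⟩, hw_ub⟩
  obtain ⟨m, hvm, ⟨hm_post, hm_le⟩, hm_max⟩ := zorn_le_nonempty₀ P chain_bdd v ⟨hv, hvb⟩
  have hSm : S m ∈ P := ⟨hS hm_post, (hS hm_le).trans hb⟩
  exact ⟨m, (hm_max hSm hm_post).antisymm hm_post, hvm, hm_le⟩

/-- In a chain complete partially ordered set (bounded, with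
suprema of all chains), an order preserving self-map `S` with at most one
fixed point is order stable: `S` has a unique fixed point `v̄`, `v ≤ S v`
implies `v ≤ v̄`, and `S v ≤ v` implies `v̄ ≤ v`. -/
theorem stmt1 {V : Type*} [PartialOrder V]
    -- `V` is bounded:
    (bot top : V) (hbot : ∀ v : V, bot ≤ v) (htop : ∀ v : V, v ≤ top)
    -- every chain has a supremum:
    (hcc : ∀ C : Set V, IsChain (· ≤ ·) C → ∃ w : V, IsLUB C w)
    -- `S` is an order preserving self-map:
    (S : V → V) (hS : Monotone S)
    -- `S` has at most one fixed point:
    (huniq : ∀ u w : V, S u = u → S w = w → u = w) :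
    ∃ vbar : V, S vbar = vbar ∧ (∀ v : V, S v = v → v = vbar) ∧
      (∀ v : V, v ≤ S v → v ≤ vbar) ∧ (∀ v : V, S v ≤ v → vbar ≤ v) := by
  have between : ∀ {v b : V}, v ≤ S v → S b ≤ b → v ≤ b → ∃ w : V, S w = w ∧ v ≤ w ∧ w ≤ b :=
    exists_fixedPoint_between_of_le_map_of_map_le (fun C hC _ => hcc C hC) hS
  obtain ⟨vbar, hfix, -⟩ := between (hbot (S bot)) (htop (S top)) (hbot top)
  refine ⟨vbar, hfix, fun v hv => huniq v vbar hv hfix, fun v hv => ?_, fun v hv => ?_⟩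
  · obtain ⟨w, hw, hvw, -⟩ := between hv (htop (S top)) (htop v)
    exact hvw.trans (huniq w vbar hw hfix).le
  · obtain ⟨w, hw, -, hwv⟩ := between (hbot (S bot)) hv (hbot v)
    exact (huniq vbar w hfix hw).le.trans hwv
end

section
/- Let V be a countably chain complete partially ordered set and let S be an order continuous self-map of V with at most one fixed point in V. Then S is order stable on V: S has a unique fixed point v̄ in V, v ≤ Sv implies v ≤ v̄, and Sv ≤ v implies v̄ ≤ v. -/
/-!
Order continuity makes `S` monotone, so for `a ≤ S a` the Kleene iterates `S^[n] a` increase;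
their supremum `w` is fixed by `S`, since `S w` is the supremum of the shifted sequence. Started
at `⊥`, this gives the least fixed point, which also lies below every `v` with `S v ≤ v`; started
at any `v ≤ S v`, it gives a fixed point above `v`, which must be the unique one.
-/

open Function Set

section KleeneIteration

variable {α : Type*} [PartialOrder α] {S : α → α}

theorem monotone_of_map_isLUB_range
    (hS : ∀ (f : ℕ → α) (v : α), Monotone f → IsLUB (range f) v → IsLUB (range (S ∘ f)) (S v)) :
    Monotone S := by
  intro a b hab
  let f : ℕ → α := fun n => if n = 0 then a else b
  have hf : Monotone f := monotone_nat_of_le_succ fun n => by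
    rcases n with _ | n <;> simp [f, hab]
  have hb : IsGreatest (range f) b := ⟨⟨1, rfl⟩, by
    rintro _ ⟨n, rfl⟩
    rcases n with _ | n <;> simp [f, hab]⟩
  exact (hS f b hf hb.isLUB).1 ⟨0, rfl⟩

theorem iterate_le_of_le_of_map_le (hS : Monotone S) {a v : α} (hav : a ≤ v) (hv : S v ≤ v) :
    ∀ n, S^[n] a ≤ v
  | 0 => hav
  | n + 1 => by
    rw [iterate_succ_apply']
    exact (hS (iterate_le_of_le_of_map_le hS hav hv n)).trans hv

theorem isFixedPt_of_isLUB_range_iterate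
    (hS : ∀ (f : ℕ → α) (v : α), Monotone f → IsLUB (range f) v → IsLUB (range (S ∘ f)) (S v))
    {a w : α} (ha : a ≤ S a) (hw : IsLUB (range fun n => S^[n] a) w) : IsFixedPt S w := by
  have hmono := monotone_of_map_isLUB_range hS
  have hSw := hS _ w (hmono.monotone_iterate_of_le_map ha) hw
  apply le_antisymm
  · refine hSw.2 ?_
    rintro _ ⟨n, rfl⟩
    simpa only [comp_apply, ← iterate_succ_apply' S] using hw.1 ⟨n + 1, rfl⟩
  · refine hw.2 ?_
    rintro _ ⟨n, rfl⟩
    calc S^[n] a ≤ S^[n + 1] a := hmono.monotone_iterate_of_le_map ha n.le_succ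
      _ = S (S^[n] a) := iterate_succ_apply' S n a
      _ ≤ S w := hSw.1 ⟨n, rfl⟩

theorem exists_isFixedPt_ge_of_le_map
    (hccc : ∀ f : ℕ → α, Monotone f → ∃ w : α, IsLUB (range f) w)
    (hS : ∀ (f : ℕ → α) (v : α), Monotone f → IsLUB (range f) v → IsLUB (range (S ∘ f)) (S v))
    {a : α} (ha : a ≤ S a) :
    ∃ w, IsFixedPt S w ∧ a ≤ w ∧ ∀ v, a ≤ v → S v ≤ v → w ≤ v := by
  have hmono := monotone_of_map_isLUB_range hS
  obtain ⟨w, hw⟩ := hccc _ (hmono.monotone_iterate_of_le_map ha)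
  refine ⟨w, isFixedPt_of_isLUB_range_iterate hS ha hw, hw.1 ⟨0, rfl⟩, fun v hav hv => ?_⟩
  exact hw.2 <| forall_mem_range.2 (iterate_le_of_le_of_map_le hmono hav hv)

end KleeneIteration

theorem stmt2_general {V : Type*} [PartialOrder V]
    -- `V` is bounded:
    (bot : V) (hbot : ∀ v : V, bot ≤ v)
    -- every increasing sequence has a supremum:
    (hccc : ∀ f : ℕ → V, Monotone f → ∃ w : V, IsLUB (Set.range f) w)
    -- `S` is an order continuous self-map:
    (S : V → V)
    (hS : ∀ (f : ℕ → V) (v : V), Monotone f → IsLUB (Set.range f) v →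
      Monotone (fun n => S (f n)) ∧ IsLUB (Set.range fun n => S (f n)) (S v))
    -- `S` has at most one fixed point:
    (huniq : ∀ u w : V, S u = u → S w = w → u = w) :
    ∃ vbar : V, S vbar = vbar ∧ (∀ v : V, S v = v → v = vbar) ∧
      (∀ v : V, v ≤ S v → v ≤ vbar) ∧ (∀ v : V, S v ≤ v → vbar ≤ v) := by
  have hS' := fun f v hf hv => (hS f v hf hv).2
  obtain ⟨vbar, hfix, -, hleast⟩ := exists_isFixedPt_ge_of_le_map hccc hS' (hbot (S bot))
  refine ⟨vbar, hfix, fun v hv => huniq v vbar hv hfix, fun v hv => ?_,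
    fun v hv => hleast v (hbot v) hv⟩
  obtain ⟨w, hwfix, hvw, -⟩ := exists_isFixedPt_ge_of_le_map hccc hS' hv
  exact huniq w vbar hwfix hfix ▸ hvw

/-- In a countably chain complete partially ordered set (bounded,
with suprema of increasing sequences), an order continuous self-map `S` with at
most one fixed point is order stable: `S` has a unique fixed point `v̄`,
`v ≤ S v` implies `v ≤ v̄`, and `S v ≤ v` implies `v̄ ≤ v`. -/
theorem stmt2 {V : Type*} [PartialOrder V]
    -- `V` is bounded:
    (bot top : V) (hbot : ∀ v : V, bot ≤ v) (htop : ∀ v : V, v ≤ top)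
    -- every increasing sequence has a supremum:
    (hccc : ∀ f : ℕ → V, Monotone f → ∃ w : V, IsLUB (Set.range f) w)
    -- `S` is an order continuous self-map:
    (S : V → V)
    (hS : ∀ (f : ℕ → V) (v : V), Monotone f → IsLUB (Set.range f) v →
      Monotone (fun n => S (f n)) ∧ IsLUB (Set.range fun n => S (f n)) (S v))
    -- `S` has at most one fixed point:
    (huniq : ∀ u w : V, S u = u → S w = w → u = w) :
    ∃ vbar : V, S vbar = vbar ∧ (∀ v : V, S v = v → v = vbar) ∧
      (∀ v : V, v ≤ S v → v ≤ vbar) ∧ (∀ v : V, S v ≤ v → vbar ≤ v) :=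
  stmt2_general bot hbot hccc S hS huniq
end

section
/- Let (V, 𝕋) be a regular ADP such that every T_σ is order continuous and V is countably chain complete. Then the Bellman operator T is order continuous on V: if v_n ↑ v̄ in V, then T v_n ↑ T v̄. -/
/-! A greedy policy `σ` for the limit `v̄` realises `Bell v̄ = T σ v̄ = sup_n T σ v_n`, and each
`T σ v_n` is bounded by `Bell v_n ≤ Bell v̄`; so the supremum of `Bell v_n` is squeezed to
`Bell v̄`. -/

theorem IsLUB.range_of_le {V ι : Type*} [Preorder V] {f g : ι → V} {a : V}
    (hg : IsLUB (Set.range g) a) (hgf : ∀ i, g i ≤ f i) (hfa : ∀ i, f i ≤ a) :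
    IsLUB (Set.range f) a :=
  ⟨Set.forall_mem_range.2 hfa, fun _ hb =>
    hg.2 <| Set.forall_mem_range.2 fun i => (hgf i).trans (hb ⟨i, rfl⟩)⟩

section Bellman

variable {V Pol : Type*} [Preorder V] {T : Pol → V → V} {Bell : V → V}

theorem le_bellman (hreg : ∀ v : V, ∃ σ : Pol, ∀ τ : Pol, T τ v ≤ T σ v)
    (hBell : ∀ (v : V) (σ : Pol), (∀ τ : Pol, T τ v ≤ T σ v) → Bell v = T σ v)
    (τ : Pol) (v : V) : T τ v ≤ Bell v := by
  obtain ⟨σ, hσ⟩ := hreg v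
  exact (hσ τ).trans_eq (hBell v σ hσ).symm

theorem monotone_bellman (hmono : ∀ σ : Pol, Monotone (T σ))
    (hreg : ∀ v : V, ∃ σ : Pol, ∀ τ : Pol, T τ v ≤ T σ v)
    (hBell : ∀ (v : V) (σ : Pol), (∀ τ : Pol, T τ v ≤ T σ v) → Bell v = T σ v) :
    Monotone Bell := by
  intro v w hvw
  obtain ⟨σ, hσ⟩ := hreg v
  calc Bell v = T σ v := hBell v σ hσ
    _ ≤ T σ w := hmono σ hvw
    _ ≤ Bell w := le_bellman hreg hBell σ w

end Bellman

theorem stmt6_general {V Pol : Type*} [PartialOrder V]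
    (T : Pol → V → V) (hmono : ∀ σ : Pol, Monotone (T σ))
    -- regularity: every `v` has a `v`-greedy policy:
    (hreg : ∀ v : V, ∃ σ : Pol, ∀ τ : Pol, T τ v ≤ T σ v)
    -- the Bellman operator:
    (Bell : V → V)
    (hBell : ∀ (v : V) (σ : Pol), (∀ τ : Pol, T τ v ≤ T σ v) → Bell v = T σ v)
    -- each policy operator is order continuous:
    (hcont : ∀ (σ : Pol) (f : ℕ → V) (v : V), Monotone f → IsLUB (Set.range f) v →
      IsLUB (Set.range fun n => T σ (f n)) (T σ v)) :
    ∀ (f : ℕ → V) (vbar : V), Monotone f → IsLUB (Set.range f) vbar →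
      Monotone (fun n => Bell (f n)) ∧
      IsLUB (Set.range fun n => Bell (f n)) (Bell vbar) := by
  intro f vbar hf hlub
  have hBell_mono := monotone_bellman hmono hreg hBell
  refine ⟨hBell_mono.comp hf, ?_⟩
  obtain ⟨σ, hσ⟩ := hreg vbar
  have hσ_lub : IsLUB (Set.range fun n => T σ (f n)) (Bell vbar) :=
    hBell vbar σ hσ ▸ hcont σ f vbar hf hlub
  exact hσ_lub.range_of_le (fun n => le_bellman hreg hBell σ (f n))
    (fun n => hBell_mono (hlub.1 ⟨n, rfl⟩))

/-- Let `(V, 𝕋)` be a regular ADP whose policy operators are all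
order continuous, and suppose `V` is countably chain complete.  Then the
Bellman operator `Bell` is order continuous on `V`: if `v_n ↑ v̄` then
`Bell v_n ↑ Bell v̄`. -/
theorem stmt6 {V Pol : Type*} [PartialOrder V] [Nonempty Pol]
    (T : Pol → V → V) (hmono : ∀ σ : Pol, Monotone (T σ))
    -- regularity: every `v` has a `v`-greedy policy:
    (hreg : ∀ v : V, ∃ σ : Pol, ∀ τ : Pol, T τ v ≤ T σ v)
    -- the Bellman operator:
    (Bell : V → V)
    (hBell : ∀ (v : V) (σ : Pol), (∀ τ : Pol, T τ v ≤ T σ v) → Bell v = T σ v)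
    -- each policy operator is order continuous:
    (hcont : ∀ (σ : Pol) (f : ℕ → V) (v : V), Monotone f → IsLUB (Set.range f) v →
      IsLUB (Set.range fun n => T σ (f n)) (T σ v))
    -- `V` is countably chain complete (bounded, increasing sequences have suprema):
    (bot top : V) (hbot : ∀ v : V, bot ≤ v) (htop : ∀ v : V, v ≤ top)
    (hccc : ∀ f : ℕ → V, Monotone f → ∃ w : V, IsLUB (Set.range f) w) :
    ∀ (f : ℕ → V) (vbar : V), Monotone f → IsLUB (Set.range f) vbar →
      Monotone (fun n => Bell (f n)) ∧
      IsLUB (Set.range fun n => Bell (f n)) (Bell vbar) :=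
  stmt6_general T hmono hreg Bell hBell hcont
end

section
/- Let (V, 𝕋) be a regular, well-posed ADP and suppose V_Σ has a greatest element v*. Then v* satisfies the Bellman equation Tv* = v* if and only if Bellman's principle of optimality holds, i.e., for every σ ∈ Σ, σ is optimal if and only if σ is v*-greedy. -/
/-!
Under regularity, `σ` is `v`-greedy exactly when `T σ v = Bell v`, and by well-posedness
`σ` is optimal exactly when `v*` is a fixed point of `T σ`. So if `Bell v* = v*`, both
properties of `σ` say `T σ v* = v*`. Conversely, the principle of optimality applied to the
optimal policy `σ*` makes it `v*`-greedy, whence `Bell v* = T σ* v* = v*`.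
-/

def IsGreedy {V Pol : Type*} [LE V] (T : Pol → V → V) (v : V) (σ : Pol) : Prop :=
  ∀ τ : Pol, T τ v ≤ T σ v

theorem isGreedy_iff_apply_eq_bell {V Pol : Type*} [LE V] {T : Pol → V → V} {Bell : V → V}
    (hreg : ∀ v : V, ∃ σ : Pol, IsGreedy T v σ)
    (hBell : ∀ (v : V) (σ : Pol), IsGreedy T v σ → Bell v = T σ v) {v : V} {σ : Pol} :
    IsGreedy T v σ ↔ T σ v = Bell v := by
  refine ⟨fun hσ => (hBell v σ hσ).symm, fun hσ τ => ?_⟩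
  obtain ⟨g, hg⟩ := hreg v
  calc T τ v ≤ T g v := hg τ
    _ = T σ v := by rw [← hBell v g hg, hσ]

theorem vfix_eq_iff_apply_eq {V Pol : Type*} {T : Pol → V → V} {vfix : Pol → V}
    (hfix : ∀ σ : Pol, T σ (vfix σ) = vfix σ)
    (huniq : ∀ (σ : Pol) (v : V), T σ v = v → v = vfix σ) {σ : Pol} {v : V} :
    vfix σ = v ↔ T σ v = v :=
  ⟨fun h => h ▸ hfix σ, fun h => (huniq σ v h).symm⟩

theorem forall_le_iff_eq_of_forall_le {α ι : Type*} [PartialOrder α] {f : ι → α} {i j : ι}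
    (hj : ∀ k, f k ≤ f j) : (∀ k, f k ≤ f i) ↔ f i = f j :=
  ⟨fun hi => le_antisymm (hj i) (hi j), fun h k => h ▸ hj k⟩

theorem stmt7_general {V Pol : Type*} [PartialOrder V]
    (T : Pol → V → V)
    -- regularity:
    (hreg : ∀ v : V, ∃ σ : Pol, ∀ τ : Pol, T τ v ≤ T σ v)
    -- the Bellman operator:
    (Bell : V → V)
    (hBell : ∀ (v : V) (σ : Pol), (∀ τ : Pol, T τ v ≤ T σ v) → Bell v = T σ v)
    -- well-posedness: `vfix σ` is the unique fixed point of `T σ`: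
    (vfix : Pol → V) (hfix : ∀ σ : Pol, T σ (vfix σ) = vfix σ)
    (huniq : ∀ (σ : Pol) (v : V), T σ v = v → v = vfix σ)
    -- `v* = vfix σstar` is a greatest element of `V_Σ`:
    (σstar : Pol) (hstar : ∀ τ : Pol, vfix τ ≤ vfix σstar) :
    Bell (vfix σstar) = vfix σstar ↔
      (∀ σ : Pol, (∀ τ : Pol, vfix τ ≤ vfix σ) ↔
        (∀ τ : Pol, T τ (vfix σstar) ≤ T σ (vfix σstar))) := by
  have greedy_iff :
      ∀ σ, IsGreedy T (vfix σstar) σ ↔ T σ (vfix σstar) = Bell (vfix σstar) :=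
    fun _ => isGreedy_iff_apply_eq_bell hreg hBell
  constructor
  · intro hBellFixed σ
    rw [forall_le_iff_eq_of_forall_le hstar, vfix_eq_iff_apply_eq hfix huniq]
    exact (hBellFixed ▸ greedy_iff σ).symm
  · intro hPrinciple
    rw [← (greedy_iff σstar).mp ((hPrinciple σstar).mp hstar), hfix]

/-- Let `(V, 𝕋)` be a regular well-posed ADP and suppose
`V_Σ = {v_σ : σ ∈ Σ}` has a greatest element `v* = v_{σ*}`.  Then `v*`
satisfies the Bellman equation `Bell v* = v*` if and only if Bellman's
principle of optimality holds: for every `σ`, `σ` is optimal iff `σ` is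
`v*`-greedy. -/
theorem stmt7 {V Pol : Type*} [PartialOrder V] [Nonempty Pol]
    (T : Pol → V → V) (hmono : ∀ σ : Pol, Monotone (T σ))
    -- regularity:
    (hreg : ∀ v : V, ∃ σ : Pol, ∀ τ : Pol, T τ v ≤ T σ v)
    -- the Bellman operator:
    (Bell : V → V)
    (hBell : ∀ (v : V) (σ : Pol), (∀ τ : Pol, T τ v ≤ T σ v) → Bell v = T σ v)
    -- well-posedness: `vfix σ` is the unique fixed point of `T σ`:
    (vfix : Pol → V) (hfix : ∀ σ : Pol, T σ (vfix σ) = vfix σ)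
    (huniq : ∀ (σ : Pol) (v : V), T σ v = v → v = vfix σ)
    -- `v* = vfix σstar` is a greatest element of `V_Σ`:
    (σstar : Pol) (hstar : ∀ τ : Pol, vfix τ ≤ vfix σstar) :
    Bell (vfix σstar) = vfix σstar ↔
      (∀ σ : Pol, (∀ τ : Pol, vfix τ ≤ vfix σ) ↔
        (∀ τ : Pol, T τ (vfix σstar) ≤ T σ (vfix σstar))) :=
  stmt7_general T hreg Bell hBell vfix hfix huniq σstar hstar
end

section
/- Let (V, 𝕋) be a regular, well-posed ADP that is downward stable, and suppose the Bellman operator T has at least one fixed point in V. Then the fundamental ADP optimality results hold: (B1) V_Σ has a greatest element v*; (B2) v* is the unique fixed point of T in V; (B3) Bellman's principle of optimality holds (for every σ ∈ Σ, σ is optimal if and only if σ is v*-greedy). -/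
/-!
Every fixed point `v` of the Bellman operator is a greatest element of `V_Σ`: a `v`-greedy
policy `σ` satisfies `T_σ v = T v = v`, so `v = v_σ` by well-posedness, and `T_τ v ≤ T_σ v = v`
gives `v_τ ≤ v` for every `τ` by downward stability. Greatest elements are unique, which yields
(B1) and (B2). For (B3), an optimal `σ` has `v_σ = v*`, so `T_σ v* = v* ≥ T_τ v*`; conversely a
`v*`-greedy `σ` fixes `v*`, hence `v_σ = v*`.
-/

open Function Set

namespace ADP

variable {V Pol : Type*}

def IsGreedy [LE V] (T : Pol → V → V) (v : V) (σ : Pol) : Prop :=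
  ∀ τ, T τ v ≤ T σ v

section Preorder

variable [Preorder V] {T : Pol → V → V} {Bell : V → V} {vfix : Pol → V}

theorem apply_le_of_isFixedPt_bell (hreg : ∀ v, ∃ σ, IsGreedy T v σ)
    (hBell : ∀ v σ, IsGreedy T v σ → Bell v = T σ v) {v : V} (hv : IsFixedPt Bell v)
    (τ : Pol) : T τ v ≤ v := by
  obtain ⟨σ, hσ⟩ := hreg v
  calc T τ v ≤ T σ v := hσ τ
    _ = v := (hBell v σ hσ).symm.trans hv

theorem eq_vfix_of_isGreedy_of_isFixedPt_bell
    (hBell : ∀ v σ, IsGreedy T v σ → Bell v = T σ v)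
    (huniq : ∀ σ v, T σ v = v → v = vfix σ) {v : V} {σ : Pol} (hσ : IsGreedy T v σ)
    (hv : IsFixedPt Bell v) : v = vfix σ :=
  huniq σ v ((hBell v σ hσ).symm.trans hv)

theorem isGreatest_range_vfix_of_isFixedPt_bell (hreg : ∀ v, ∃ σ, IsGreedy T v σ)
    (hBell : ∀ v σ, IsGreedy T v σ → Bell v = T σ v)
    (huniq : ∀ σ v, T σ v = v → v = vfix σ) (hdown : ∀ σ v, T σ v ≤ v → vfix σ ≤ v)
    {v : V} (hv : IsFixedPt Bell v) : IsGreatest (range vfix) v := by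
  obtain ⟨σ, hσ⟩ := hreg v
  refine ⟨⟨σ, (eq_vfix_of_isGreedy_of_isFixedPt_bell hBell huniq hσ hv).symm⟩, ?_⟩
  rintro _ ⟨τ, rfl⟩
  exact hdown τ v (apply_le_of_isFixedPt_bell hreg hBell hv τ)

end Preorder

theorem forall_vfix_le_iff_isGreedy [PartialOrder V] {T : Pol → V → V} {Bell : V → V}
    {vfix : Pol → V} (hreg : ∀ v, ∃ σ, IsGreedy T v σ)
    (hBell : ∀ v σ, IsGreedy T v σ → Bell v = T σ v) (hfix : ∀ σ, T σ (vfix σ) = vfix σ)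
    (huniq : ∀ σ v, T σ v = v → v = vfix σ) {vstar : V} (hstar : IsFixedPt Bell vstar)
    (hgreat : IsGreatest (range vfix) vstar) (σ : Pol) :
    (∀ τ, vfix τ ≤ vfix σ) ↔ IsGreedy T vstar σ := by
  constructor
  · intro hopt τ
    obtain ⟨ρ, hρ⟩ := hgreat.1
    have hσ : vfix σ = vstar := le_antisymm (hgreat.2 ⟨σ, rfl⟩) (hρ ▸ hopt ρ)
    calc T τ vstar ≤ vstar := apply_le_of_isFixedPt_bell hreg hBell hstar τ
      _ = T σ vstar := by rw [← hσ, hfix]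
  · intro hσ τ
    rw [← eq_vfix_of_isGreedy_of_isFixedPt_bell hBell huniq hσ hstar]
    exact hgreat.2 ⟨τ, rfl⟩

end ADP

open ADP in
theorem stmt8_general {V Pol : Type*} [PartialOrder V]
    (T : Pol → V → V)
    -- regularity:
    (hreg : ∀ v : V, ∃ σ : Pol, ∀ τ : Pol, T τ v ≤ T σ v)
    -- the Bellman operator:
    (Bell : V → V)
    (hBell : ∀ (v : V) (σ : Pol), (∀ τ : Pol, T τ v ≤ T σ v) → Bell v = T σ v)
    -- well-posedness:
    (vfix : Pol → V) (hfix : ∀ σ : Pol, T σ (vfix σ) = vfix σ)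
    (huniq : ∀ (σ : Pol) (v : V), T σ v = v → v = vfix σ)
    -- downward stability of every policy operator:
    (hdown : ∀ (σ : Pol) (v : V), T σ v ≤ v → vfix σ ≤ v)
    -- the Bellman operator has at least one fixed point:
    (hfp : ∃ v : V, Bell v = v) :
    ∃ σstar : Pol,
      -- (B1): `vfix σstar` is a greatest element of `V_Σ`
      (∀ τ : Pol, vfix τ ≤ vfix σstar) ∧
      -- (B2): `v*` is the unique fixed point of `Bell` in `V`
      Bell (vfix σstar) = vfix σstar ∧
      (∀ v : V, Bell v = v → v = vfix σstar) ∧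
      -- (B3): Bellman's principle of optimality
      (∀ σ : Pol, (∀ τ : Pol, vfix τ ≤ vfix σ) ↔
        (∀ τ : Pol, T τ (vfix σstar) ≤ T σ (vfix σstar))) := by
  have hgreat {v : V} (hv : IsFixedPt Bell v) : IsGreatest (range vfix) v :=
    isGreatest_range_vfix_of_isFixedPt_bell hreg hBell huniq hdown hv
  obtain ⟨v, hv⟩ := hfp
  obtain ⟨⟨σstar, rfl⟩, hub⟩ := hgreat hv
  refine ⟨σstar, fun τ => hub ⟨τ, rfl⟩, hv, fun w hw => (hgreat hw).unique (hgreat hv), ?_⟩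
  exact forall_vfix_le_iff_isGreedy hreg hBell hfix huniq hv (hgreat hv)

/-- Theorem t:bk: Let `(V, 𝕋)` be a regular well-posed ADP that
is downward stable, and suppose the Bellman operator `Bell` has at least one
fixed point in `V`.  Then the fundamental ADP optimality results hold:
(B1) `V_Σ` has a greatest element `v* = vfix σ*`; (B2) `v*` is the unique
fixed point of `Bell` in `V`; (B3) Bellman's principle of optimality holds. -/
theorem stmt8 {V Pol : Type*} [PartialOrder V] [Nonempty Pol]
    (T : Pol → V → V) (hmono : ∀ σ : Pol, Monotone (T σ))
    -- regularity:
    (hreg : ∀ v : V, ∃ σ : Pol, ∀ τ : Pol, T τ v ≤ T σ v)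
    -- the Bellman operator:
    (Bell : V → V)
    (hBell : ∀ (v : V) (σ : Pol), (∀ τ : Pol, T τ v ≤ T σ v) → Bell v = T σ v)
    -- well-posedness:
    (vfix : Pol → V) (hfix : ∀ σ : Pol, T σ (vfix σ) = vfix σ)
    (huniq : ∀ (σ : Pol) (v : V), T σ v = v → v = vfix σ)
    -- downward stability of every policy operator:
    (hdown : ∀ (σ : Pol) (v : V), T σ v ≤ v → vfix σ ≤ v)
    -- the Bellman operator has at least one fixed point:
    (hfp : ∃ v : V, Bell v = v) :
    ∃ σstar : Pol,
      -- (B1): `vfix σstar` is a greatest element of `V_Σ`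
      (∀ τ : Pol, vfix τ ≤ vfix σstar) ∧
      -- (B2): `v*` is the unique fixed point of `Bell` in `V`
      Bell (vfix σstar) = vfix σstar ∧
      (∀ v : V, Bell v = v → v = vfix σstar) ∧
      -- (B3): Bellman's principle of optimality
      (∀ σ : Pol, (∀ τ : Pol, vfix τ ≤ vfix σ) ↔
        (∀ τ : Pol, T τ (vfix σstar) ≤ T σ (vfix σstar))) :=
  stmt8_general T hreg Bell hBell vfix hfix huniq hdown hfp
end

section
/- Let (V, 𝕋) be a regular, well-posed ADP with Bellman operator T, Howard policy operator H, and optimistic policy operator W_m (for fixed m ∈ ℕ). Then: (i) T, W_m and H all map V_U into itself; and (ii) for every v ∈ V_U, Tv ≤ W_m v ≤ T^m v. -/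
/-!
Every policy operator is dominated by the Bellman operator, so any `w` with `w ≤ T σ w` lies in
`V_U`. For `v ∈ V_U` and `σ` the selected `v`-greedy policy we have `v ≤ T σ v`, hence the
`T σ`-iterates of `v` increase; this puts `T v = T σ v`, `W_m v` and the fixed point `v_σ` in
`V_U` and gives `T v ≤ W_m v`, while `W_m v ≤ T^m v` follows by comparing iterates.
-/

section BellmanOperator

variable {V Pol : Type*} [PartialOrder V] {T : Pol → V → V} {Bell : V → V} {sel : V → Pol}

theorem policy_le_bellman
    (hBell : ∀ (v : V) (σ : Pol), (∀ τ : Pol, T τ v ≤ T σ v) → Bell v = T σ v)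
    (hsel : ∀ v : V, ∀ τ : Pol, T τ v ≤ T (sel v) v) (σ : Pol) (w : V) :
    T σ w ≤ Bell w := by
  rw [hBell w (sel w) (hsel w)]
  exact hsel w σ

theorem le_bellman_of_le_policy
    (hBell : ∀ (v : V) (σ : Pol), (∀ τ : Pol, T τ v ≤ T σ v) → Bell v = T σ v)
    (hsel : ∀ v : V, ∀ τ : Pol, T τ v ≤ T (sel v) v) {σ : Pol} {w : V} (h : w ≤ T σ w) :
    w ≤ Bell w :=
  h.trans (policy_le_bellman hBell hsel σ w)

end BellmanOperator

theorem stmt14_general {V Pol : Type*} [PartialOrder V]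
    (T : Pol → V → V) (hmono : ∀ σ : Pol, Monotone (T σ))
    -- the Bellman operator:
    (Bell : V → V)
    (hBell : ∀ (v : V) (σ : Pol), (∀ τ : Pol, T τ v ≤ T σ v) → Bell v = T σ v)
    -- well-posedness:
    (vfix : Pol → V) (hfix : ∀ σ : Pol, T σ (vfix σ) = vfix σ)
    -- a fixed greedy selection:
    (sel : V → Pol) (hsel : ∀ v : V, ∀ τ : Pol, T τ v ≤ T (sel v) v)
    (m : ℕ) (hm : 1 ≤ m) :
    ∀ v : V, v ≤ Bell v →
      -- (i) `T`, `W_m` and `H` map `V_U` into itself: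
      (Bell v ≤ Bell (Bell v)) ∧
      ((T (sel v))^[m] v ≤ Bell ((T (sel v))^[m] v)) ∧
      (vfix (sel v) ≤ Bell (vfix (sel v))) ∧
      -- (ii) `Bell v ≤ W_m v ≤ Bell^[m] v`:
      (Bell v ≤ (T (sel v))^[m] v) ∧
      ((T (sel v))^[m] v ≤ Bell^[m] v) := by
  intro v hv
  set σ := sel v
  have hBv : Bell v = T σ v := hBell v σ (hsel v)
  have hv_le : v ≤ T σ v := hBv ▸ hv
  have hiter : Monotone fun n => (T σ)^[n] v := (hmono σ).monotone_iterate_of_le_map hv_le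
  refine ⟨?_, ?_, ?_, ?_, ?_⟩
  · rw [hBv]
    exact le_bellman_of_le_policy hBell hsel (hmono σ hv_le)
  · refine le_bellman_of_le_policy hBell hsel (σ := σ) ?_
    rw [← Function.iterate_succ_apply' (T σ)]
    exact hiter m.le_succ
  · exact le_bellman_of_le_policy hBell hsel (hfix σ).ge
  · simpa [hBv] using hiter hm
  · exact (hmono σ).iterate_le_of_le (policy_le_bellman hBell hsel σ) m v

/-- Lemma (L2)-(L3): Let `(V, 𝕋)` be a regular well-posed ADP
with Bellman operator `Bell`, Howard policy operator `H v = vfix (sel v)` and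
optimistic policy operator `W_m v = (T (sel v))^[m] v` for fixed `m ≥ 1`.
Then (i) `Bell`, `W_m` and `H` all map `V_U = {v : v ≤ Bell v}` into itself,
and (ii) for every `v ∈ V_U`, `Bell v ≤ W_m v ≤ Bell^[m] v`. -/
theorem stmt14 {V Pol : Type*} [PartialOrder V] [Nonempty Pol]
    (T : Pol → V → V) (hmono : ∀ σ : Pol, Monotone (T σ))
    -- regularity:
    (hreg : ∀ v : V, ∃ σ : Pol, ∀ τ : Pol, T τ v ≤ T σ v)
    -- the Bellman operator:
    (Bell : V → V)
    (hBell : ∀ (v : V) (σ : Pol), (∀ τ : Pol, T τ v ≤ T σ v) → Bell v = T σ v)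
    -- well-posedness:
    (vfix : Pol → V) (hfix : ∀ σ : Pol, T σ (vfix σ) = vfix σ)
    (huniq : ∀ (σ : Pol) (v : V), T σ v = v → v = vfix σ)
    -- a fixed greedy selection:
    (sel : V → Pol) (hsel : ∀ v : V, ∀ τ : Pol, T τ v ≤ T (sel v) v)
    (m : ℕ) (hm : 1 ≤ m) :
    ∀ v : V, v ≤ Bell v →
      -- (i) `T`, `W_m` and `H` map `V_U` into itself:
      (Bell v ≤ Bell (Bell v)) ∧
      ((T (sel v))^[m] v ≤ Bell ((T (sel v))^[m] v)) ∧
      (vfix (sel v) ≤ Bell (vfix (sel v))) ∧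
      -- (ii) `Bell v ≤ W_m v ≤ Bell^[m] v`:
      (Bell v ≤ (T (sel v))^[m] v) ∧
      ((T (sel v))^[m] v ≤ Bell^[m] v) :=
  stmt14_general T hmono Bell hBell vfix hfix sel hsel m hm
end

section
/- Let (V, 𝕋) be a regular, well-posed, upward stable ADP with Bellman operator T, Howard policy operator H, and optimistic policy operator W_m (for fixed m ∈ ℕ). Then for every v ∈ V_U and every n ∈ ℕ: Tⁿv ≤ W_mⁿ v and Tⁿv ≤ Hⁿ v. Moreover, the sequences (Tⁿv)ₙ, (W_mⁿv)ₙ and (Hⁿv)ₙ are all increasing. -/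
/-!
Write `G u = T (sel u) u` for the greedy (Bellman) operator; it is monotone, and on the set of
`G`-subinvariant points `u ≤ G u` both the Howard operator and the optimistic operator dominate `G`
and map the set into itself: starting from `u ≤ T (sel u) u`, the iterates of `T (sel u)` increase,
and upward stability puts `u` below `vfix (sel u)`. An induction comparing iterates of a monotone
map `S` with those of any such dominating self-map `A` then gives both the comparison with `Tⁿ v`
and the monotonicity of the three sequences.
-/

section DominatedIteration

variable {V : Type*} [Preorder V] {S A : V → V}

theorem iterate_le_iterate_of_dominates (hS : Monotone S)
    (hdom : ∀ u, u ≤ S u → S u ≤ A u) (hinv : ∀ u, u ≤ S u → A u ≤ S (A u))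
    {v : V} (hv : v ≤ S v) (n : ℕ) : S^[n] v ≤ A^[n] v ∧ A^[n] v ≤ S (A^[n] v) := by
  induction n with
  | zero => exact ⟨le_rfl, hv⟩
  | succ n ih =>
    obtain ⟨hle, hsub⟩ := ih
    rw [Function.iterate_succ_apply', Function.iterate_succ_apply']
    exact ⟨(hS hle).trans (hdom _ hsub), hinv _ hsub⟩

theorem monotone_iterate_of_dominates (hS : Monotone S)
    (hdom : ∀ u, u ≤ S u → S u ≤ A u) (hinv : ∀ u, u ≤ S u → A u ≤ S (A u))
    {v : V} (hv : v ≤ S v) : Monotone fun n => A^[n] v := by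
  refine monotone_nat_of_le_succ fun n => ?_
  have hsub := (iterate_le_iterate_of_dominates hS hdom hinv hv n).2
  rw [Function.iterate_succ_apply']
  exact hsub.trans (hdom _ hsub)

end DominatedIteration

section GreedyPolicies

variable {V Pol : Type*} [Preorder V] {T : Pol → V → V} {sel : V → Pol}

theorem monotone_greedy (hmono : ∀ σ, Monotone (T σ))
    (hsel : ∀ v τ, T τ v ≤ T (sel v) v) : Monotone fun u => T (sel u) u :=
  fun _ b hab => (hmono _ hab).trans (hsel b _)

theorem greedy_le_optimistic (hmono : ∀ σ, Monotone (T σ)) {m : ℕ} (hm : 1 ≤ m) {u : V}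
    (hu : u ≤ T (sel u) u) : T (sel u) u ≤ (T (sel u))^[m] u :=
  (hmono (sel u)).monotone_iterate_of_le_map hu hm

theorem optimistic_le_greedy (hmono : ∀ σ, Monotone (T σ))
    (hsel : ∀ v τ, T τ v ≤ T (sel v) v) (m : ℕ) {u : V} (hu : u ≤ T (sel u) u) :
    (T (sel u))^[m] u ≤ T (sel ((T (sel u))^[m] u)) ((T (sel u))^[m] u) := by
  have hstep : (T (sel u))^[m] u ≤ (T (sel u))^[m + 1] u :=
    (hmono (sel u)).monotone_iterate_of_le_map hu m.le_succ
  rw [Function.iterate_succ_apply'] at hstep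
  exact hstep.trans (hsel _ _)

theorem greedy_le_howard (hmono : ∀ σ, Monotone (T σ)) {vfix : Pol → V}
    (hfix : ∀ σ, T σ (vfix σ) = vfix σ) (hup : ∀ σ v, v ≤ T σ v → v ≤ vfix σ) {u : V}
    (hu : u ≤ T (sel u) u) : T (sel u) u ≤ vfix (sel u) :=
  (hmono (sel u) (hup _ _ hu)).trans_eq (hfix _)

theorem howard_le_greedy {vfix : Pol → V} (hfix : ∀ σ, T σ (vfix σ) = vfix σ)
    (hsel : ∀ v τ, T τ v ≤ T (sel v) v) (u : V) :
    vfix (sel u) ≤ T (sel (vfix (sel u))) (vfix (sel u)) :=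
  (hfix (sel u)).symm.le.trans (hsel _ _)

end GreedyPolicies

theorem stmt15_general {V Pol : Type*} [PartialOrder V]
    (T : Pol → V → V) (hmono : ∀ σ : Pol, Monotone (T σ))
    -- the Bellman operator:
    (Bell : V → V)
    (hBell : ∀ (v : V) (σ : Pol), (∀ τ : Pol, T τ v ≤ T σ v) → Bell v = T σ v)
    -- well-posedness:
    (vfix : Pol → V) (hfix : ∀ σ : Pol, T σ (vfix σ) = vfix σ)
    -- upward stability of every policy operator:
    (hup : ∀ (σ : Pol) (v : V), v ≤ T σ v → v ≤ vfix σ)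
    -- a fixed greedy selection:
    (sel : V → Pol) (hsel : ∀ v : V, ∀ τ : Pol, T τ v ≤ T (sel v) v)
    (m : ℕ) (hm : 1 ≤ m) :
    ∀ v : V, v ≤ Bell v →
      (∀ n : ℕ,
        Bell^[n] v ≤ (fun w => (T (sel w))^[m] w)^[n] v ∧
        Bell^[n] v ≤ (fun w => vfix (sel w))^[n] v) ∧
      (Monotone fun n => Bell^[n] v) ∧
      (Monotone fun n => (fun w => (T (sel w))^[m] w)^[n] v) ∧
      (Monotone fun n => (fun w => vfix (sel w))^[n] v) := by
  intro v hv
  obtain rfl : Bell = fun u => T (sel u) u := funext fun u => hBell u (sel u) (hsel u)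
  have hG := monotone_greedy hmono hsel
  have hWdom := fun u => greedy_le_optimistic (sel := sel) hmono hm (u := u)
  have hWinv := fun u => optimistic_le_greedy hmono hsel m (u := u)
  have hHdom := fun u => greedy_le_howard (sel := sel) hmono hfix hup (u := u)
  have hHinv := fun u (_ : u ≤ T (sel u) u) => howard_le_greedy hfix hsel u
  exact ⟨fun n => ⟨(iterate_le_iterate_of_dominates hG hWdom hWinv hv n).1,
      (iterate_le_iterate_of_dominates hG hHdom hHinv hv n).1⟩,
    hG.monotone_iterate_of_le_map hv,
    monotone_iterate_of_dominates hG hWdom hWinv hv,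
    monotone_iterate_of_dominates hG hHdom hHinv hv⟩

/-- Lemma l:cl2: Let `(V, 𝕋)` be a regular well-posed upward
stable ADP with Bellman operator `Bell`, Howard policy operator
`H v = vfix (sel v)` and optimistic policy operator `W_m v = (T (sel v))^[m] v`
for fixed `m ≥ 1`.  Then for every `v ∈ V_U` and every `n`,
`Bellⁿ v ≤ W_mⁿ v` and `Bellⁿ v ≤ Hⁿ v`; moreover the VFI, OPI and HPI
sequences are all increasing. -/
theorem stmt15 {V Pol : Type*} [PartialOrder V] [Nonempty Pol]
    (T : Pol → V → V) (hmono : ∀ σ : Pol, Monotone (T σ))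
    -- regularity:
    (hreg : ∀ v : V, ∃ σ : Pol, ∀ τ : Pol, T τ v ≤ T σ v)
    -- the Bellman operator:
    (Bell : V → V)
    (hBell : ∀ (v : V) (σ : Pol), (∀ τ : Pol, T τ v ≤ T σ v) → Bell v = T σ v)
    -- well-posedness:
    (vfix : Pol → V) (hfix : ∀ σ : Pol, T σ (vfix σ) = vfix σ)
    (huniq : ∀ (σ : Pol) (v : V), T σ v = v → v = vfix σ)
    -- upward stability of every policy operator:
    (hup : ∀ (σ : Pol) (v : V), v ≤ T σ v → v ≤ vfix σ)
    -- a fixed greedy selection: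
    (sel : V → Pol) (hsel : ∀ v : V, ∀ τ : Pol, T τ v ≤ T (sel v) v)
    (m : ℕ) (hm : 1 ≤ m) :
    ∀ v : V, v ≤ Bell v →
      (∀ n : ℕ,
        Bell^[n] v ≤ (fun w => (T (sel w))^[m] w)^[n] v ∧
        Bell^[n] v ≤ (fun w => vfix (sel w))^[n] v) ∧
      (Monotone fun n => Bell^[n] v) ∧
      (Monotone fun n => (fun w => (T (sel w))^[m] w)^[n] v) ∧
      (Monotone fun n => (fun w => vfix (sel w))^[n] v) :=
  stmt15_general T hmono Bell hBell vfix hfix hup sel hsel m hm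
end

section
/- Let (V, 𝕋) be a regular, well-posed, upward stable ADP for which an optimal policy exists (so V_Σ has a greatest element v*). If VFI converges (Tⁿv ↑ v* for all v ∈ V_U), then OPI converges (W_mⁿv ↑ v* for all v ∈ V_U) and HPI converges (Hⁿv ↑ v* for all v ∈ V_U). -/
/-!
Let `T` be the Bellman operator. Both the optimistic step `W_m` and the Howard step `H` map
`V_U = {u | u ≤ T u}` into itself and dominate `T` there: for `u ∈ V_U` and `σ` `u`-greedy,
`T u = T_σ u ≤ T_σ^m u ≤ v_σ` because `T_σ` is order preserving and upward stable. Hence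
`Tⁿ v ≤ Sⁿ v` for `S ∈ {W_m, H}`, and the iterates `Sⁿ v` increase since
`Sⁿ v ≤ T (Sⁿ v) ≤ Sⁿ⁺¹ v`. Every point of `V_U` lies below `v*` (it is the first term of a VFI
sequence converging to `v*`), so the iterates are squeezed between `Tⁿ v ↑ v*` and `v*`.
-/

open Set Function

section Sandwich

variable {α : Type*} [Preorder α] {B S : α → α} {x : α}

theorem iterate_le_iterate_of_le_on {s : Set α} (hB : Monotone B) (hS : MapsTo S s s)
    (hle : ∀ u ∈ s, B u ≤ S u) {v : α} (hv : v ∈ s) (n : ℕ) : B^[n] v ≤ S^[n] v :=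
  hB.seq_le_seq (x := fun k => B^[k] v) (y := fun k => S^[k] v) n le_rfl
    (fun k _ => (iterate_succ_apply' B k v).le)
    (fun k _ => (hle _ (hS.iterate k hv)).trans_eq (iterate_succ_apply' S k v).symm)

theorem monotone_isLUB_iterate_of_le_on (hB : Monotone B)
    (hS : ∀ u, u ≤ B u → S u ≤ B (S u)) (hle : ∀ u, u ≤ B u → B u ≤ S u)
    (hlim : ∀ u, u ≤ B u → IsLUB (range fun n => B^[n] u) x) {v : α} (hv : v ≤ B v) :
    (Monotone fun n => S^[n] v) ∧ IsLUB (range fun n => S^[n] v) x := by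
  have hmaps : MapsTo S {u | u ≤ B u} {u | u ≤ B u} := hS
  have hiter (n : ℕ) : S^[n] v ≤ B (S^[n] v) := hmaps.iterate n hv
  refine ⟨monotone_nat_of_le_succ fun n => ?_, ?_, fun b hb => (hlim v hv).2 ?_⟩
  · rw [iterate_succ_apply']
    exact (hiter n).trans (hle _ (hiter n))
  · rintro _ ⟨n, rfl⟩
    exact (hlim _ (hiter n)).1 ⟨0, rfl⟩
  · rintro _ ⟨n, rfl⟩
    exact (iterate_le_iterate_of_le_on hB hmaps hle hv n).trans (hb ⟨n, rfl⟩)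

end Sandwich

section GreedyPolicies

variable {V Pol : Type*} [Preorder V] {T : Pol → V → V} {Bell : V → V} {sel : V → Pol}

theorem monotone_bellman_s16 (hmono : ∀ σ, Monotone (T σ)) (hTB : ∀ σ w, T σ w ≤ Bell w)
    (hBsel : ∀ w, Bell w = T (sel w) w) : Monotone Bell := fun a b hab =>
  calc Bell a = T (sel a) a := hBsel a
    _ ≤ T (sel a) b := hmono _ hab
    _ ≤ Bell b := hTB _ _

theorem bellman_le_iterate_greedy (hmono : ∀ σ, Monotone (T σ))
    (hBsel : ∀ w, Bell w = T (sel w) w) {u : V} (hu : u ≤ Bell u) {m : ℕ} (hm : 1 ≤ m) :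
    Bell u ≤ (T (sel u))^[m] u := by
  rw [hBsel] at hu ⊢
  exact (hmono _).monotone_iterate_of_le_map hu hm

theorem iterate_greedy_le_bellman (hmono : ∀ σ, Monotone (T σ)) (hTB : ∀ σ w, T σ w ≤ Bell w)
    (hBsel : ∀ w, Bell w = T (sel w) w) {u : V} (hu : u ≤ Bell u) (m : ℕ) :
    (T (sel u))^[m] u ≤ Bell ((T (sel u))^[m] u) := by
  rw [hBsel u] at hu
  calc (T (sel u))^[m] u ≤ (T (sel u))^[m + 1] u :=
        (hmono _).monotone_iterate_of_le_map hu m.le_succ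
    _ = T (sel u) ((T (sel u))^[m] u) := iterate_succ_apply' _ _ _
    _ ≤ Bell ((T (sel u))^[m] u) := hTB _ _

theorem bellman_le_fixedPoint_greedy (hmono : ∀ σ, Monotone (T σ)) {vfix : Pol → V}
    (hfix : ∀ σ, T σ (vfix σ) = vfix σ) (hup : ∀ σ v, v ≤ T σ v → v ≤ vfix σ)
    (hBsel : ∀ w, Bell w = T (sel w) w) {u : V} (hu : u ≤ Bell u) :
    Bell u ≤ vfix (sel u) := by
  rw [hBsel] at hu ⊢
  exact (hmono _ (hup _ _ hu)).trans_eq (hfix _)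

end GreedyPolicies

theorem stmt16_general {V Pol : Type*} [PartialOrder V]
    (T : Pol → V → V) (hmono : ∀ σ : Pol, Monotone (T σ))
    -- the Bellman operator:
    (Bell : V → V)
    (hBell : ∀ (v : V) (σ : Pol), (∀ τ : Pol, T τ v ≤ T σ v) → Bell v = T σ v)
    -- well-posedness:
    (vfix : Pol → V) (hfix : ∀ σ : Pol, T σ (vfix σ) = vfix σ)
    -- upward stability of every policy operator:
    (hup : ∀ (σ : Pol) (v : V), v ≤ T σ v → v ≤ vfix σ)
    -- an optimal policy exists, i.e. `V_Σ` has greatest element `vfix σstar`: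
    (σstar : Pol)
    -- a fixed greedy selection:
    (sel : V → Pol) (hsel : ∀ v : V, ∀ τ : Pol, T τ v ≤ T (sel v) v)
    (m : ℕ) (hm : 1 ≤ m)
    -- VFI converges:
    (hVFI : ∀ v : V, v ≤ Bell v →
      (Monotone fun n => Bell^[n] v) ∧
      IsLUB (Set.range fun n => Bell^[n] v) (vfix σstar)) :
    -- OPI and HPI converge:
    ∀ v : V, v ≤ Bell v →
      (Monotone fun n => (fun w => (T (sel w))^[m] w)^[n] v) ∧
      IsLUB (Set.range fun n => (fun w => (T (sel w))^[m] w)^[n] v) (vfix σstar) ∧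
      (Monotone fun n => (fun w => vfix (sel w))^[n] v) ∧
      IsLUB (Set.range fun n => (fun w => vfix (sel w))^[n] v) (vfix σstar) := by
  intro v hv
  have hBsel (w : V) : Bell w = T (sel w) w := hBell w (sel w) (hsel w)
  have hTB (σ : Pol) (w : V) : T σ w ≤ Bell w := (hsel w σ).trans_eq (hBsel w).symm
  have hB := monotone_bellman_s16 hmono hTB hBsel
  have hlim (u : V) (hu : u ≤ Bell u) := (hVFI u hu).2
  have hOPI := monotone_isLUB_iterate_of_le_on hB
    (fun u hu => iterate_greedy_le_bellman hmono hTB hBsel hu m)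
    (fun u hu => bellman_le_iterate_greedy hmono hBsel hu hm) hlim hv
  have hHPI := monotone_isLUB_iterate_of_le_on hB (fun u _ => (hfix (sel u)).ge.trans (hTB _ _))
    (fun u hu => bellman_le_fixedPoint_greedy hmono hfix hup hBsel hu) hlim hv
  exact ⟨hOPI.1, hOPI.2, hHPI.1, hHPI.2⟩

/-- Corollary c:cl2: Let `(V, 𝕋)` be a regular well-posed
upward stable ADP for which an optimal policy exists, with value function
`v* = vfix σ*`.  If VFI converges (`Bellⁿ v ↑ v*` for all `v ∈ V_U`), then
OPI converges (`W_mⁿ v ↑ v*` for all `v ∈ V_U`) and HPI converges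
(`Hⁿ v ↑ v*` for all `v ∈ V_U`). -/
theorem stmt16 {V Pol : Type*} [PartialOrder V] [Nonempty Pol]
    (T : Pol → V → V) (hmono : ∀ σ : Pol, Monotone (T σ))
    -- regularity:
    (hreg : ∀ v : V, ∃ σ : Pol, ∀ τ : Pol, T τ v ≤ T σ v)
    -- the Bellman operator:
    (Bell : V → V)
    (hBell : ∀ (v : V) (σ : Pol), (∀ τ : Pol, T τ v ≤ T σ v) → Bell v = T σ v)
    -- well-posedness:
    (vfix : Pol → V) (hfix : ∀ σ : Pol, T σ (vfix σ) = vfix σ)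
    (huniq : ∀ (σ : Pol) (v : V), T σ v = v → v = vfix σ)
    -- upward stability of every policy operator:
    (hup : ∀ (σ : Pol) (v : V), v ≤ T σ v → v ≤ vfix σ)
    -- an optimal policy exists, i.e. `V_Σ` has greatest element `vfix σstar`:
    (σstar : Pol) (hstar : ∀ τ : Pol, vfix τ ≤ vfix σstar)
    -- a fixed greedy selection:
    (sel : V → Pol) (hsel : ∀ v : V, ∀ τ : Pol, T τ v ≤ T (sel v) v)
    (m : ℕ) (hm : 1 ≤ m)
    -- VFI converges:
    (hVFI : ∀ v : V, v ≤ Bell v →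
      (Monotone fun n => Bell^[n] v) ∧
      IsLUB (Set.range fun n => Bell^[n] v) (vfix σstar)) :
    -- OPI and HPI converge:
    ∀ v : V, v ≤ Bell v →
      (Monotone fun n => (fun w => (T (sel w))^[m] w)^[n] v) ∧
      IsLUB (Set.range fun n => (fun w => (T (sel w))^[m] w)^[n] v) (vfix σstar) ∧
      (Monotone fun n => (fun w => vfix (sel w))^[n] v) ∧
      IsLUB (Set.range fun n => (fun w => vfix (sel w))^[n] v) (vfix σstar) :=
  stmt16_general T hmono Bell hBell vfix hfix hup σstar sel hsel m hm hVFI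
end
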